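/- arXiv:2301.06199 — 4 statements merged into one kernel-verified Lean document; each statement's English description precedes it below -/
import Mathlib

section
/- Let π̄: ℝ^d → [ε, 1] (for some ε > 0) and μ̄: ℝ^d → [0, 1] be arbitrary measurable candidate nuisance functions, and define the uncentered influence-function value φ̄ = 1{A=a}/π̄(X) · (Y − μ̄(X)) + μ̄(X). Then for every bounded measurable function h: ℝ^d → ℝ, E[φ̄ · h(X)] − E[μ_a(X) · h(X)] = E[ h(X) · (μ_a(X) − μ̄(X)) · (π_a(X) − π̄(X)) / π̄(X) ]; i.e., the bias of the influence-function-based functional is a second-order product of the two nuisance errors. -/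
open MeasureTheory

/-- second-order bias expansion of the uncentered influence-function
functional with arbitrary candidate nuisances. -/
theorem influence_function_bias_second_order
    {Ω : Type*} [MeasurableSpace Ω] (P : Measure Ω) [IsProbabilityMeasure P]
    {d : ℕ} (X : Ω → (Fin d → ℝ)) (A : Ω → Bool) (Y : Ω → ℝ)
    (hX : Measurable X) (hA : Measurable A) (hY : Measurable Y)
    (hY01 : ∀ ω, Y ω ∈ Set.Icc (0 : ℝ) 1)
    (a : Bool)
    (piA mu : (Fin d → ℝ) → ℝ)
    (hpim : Measurable piA) (hmum : Measurable mu)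
    (hpi01 : ∀ x, piA x ∈ Set.Icc (0 : ℝ) 1) (hmu01 : ∀ x, mu x ∈ Set.Icc (0 : ℝ) 1)
    -- π_a is a version of P(A = a | X):
    (hpi : ∀ g : (Fin d → ℝ) → ℝ, Measurable g → (∃ C, ∀ x, |g x| ≤ C) →
      ∫ ω, (if A ω = a then g (X ω) else 0) ∂P = ∫ ω, piA (X ω) * g (X ω) ∂P)
    -- μ_a is a version of E[Y | X, A = a]:
    (hmu : ∀ g : (Fin d → ℝ) → ℝ, Measurable g → (∃ C, ∀ x, |g x| ≤ C) →
      ∫ ω, (if A ω = a then Y ω * g (X ω) else 0) ∂P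
        = ∫ ω, (if A ω = a then mu (X ω) * g (X ω) else 0) ∂P)
    -- candidate nuisance functions:
    (ε : ℝ) (hε : 0 < ε)
    (pib mub : (Fin d → ℝ) → ℝ) (hpibm : Measurable pib) (hmubm : Measurable mub)
    (hpib : ∀ x, pib x ∈ Set.Icc ε 1) (hmub : ∀ x, mub x ∈ Set.Icc (0 : ℝ) 1)
    -- bounded measurable h:
    (h : (Fin d → ℝ) → ℝ) (hhm : Measurable h) (hhb : ∃ C, ∀ x, |h x| ≤ C) :
    (∫ ω, ((if A ω = a then (1 : ℝ) else 0) / pib (X ω) * (Y ω - mub (X ω)) + mub (X ω))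
        * h (X ω) ∂P)
      - ∫ ω, mu (X ω) * h (X ω) ∂P
      = ∫ ω, h (X ω) * (mu (X ω) - mub (X ω)) * (piA (X ω) - pib (X ω)) / pib (X ω) ∂P := by
  classical
  obtain ⟨C, hC⟩ := hhb
  have hC0 : 0 ≤ C := le_trans (abs_nonneg _) (hC default)
  have hpibpos : ∀ x, 0 < pib x := fun x => lt_of_lt_of_le hε (hpib x).1
  have hpibne : ∀ x, pib x ≠ 0 := fun x => (hpibpos x).ne'
  have hε1 : ε ≤ 1 := le_trans (hpib default).1 (hpib default).2
  have hCε0 : 0 ≤ C / ε := div_nonneg hC0 hε.le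
  have hCle : C ≤ C / ε := by
    rw [le_div_iff₀ hε]; nlinarith
  have habs : ∀ r : ℝ, r ∈ Set.Icc (0 : ℝ) 1 → |r| ≤ 1 := fun r hr =>
    abs_le.mpr ⟨by linarith [hr.1], hr.2⟩
  -- the auxiliary functions on the covariate space
  set g1 : (Fin d → ℝ) → ℝ := fun x => mu x * h x / pib x with hg1def
  set g2 : (Fin d → ℝ) → ℝ := fun x => mub x * h x / pib x with hg2def
  set g3 : (Fin d → ℝ) → ℝ := fun x => h x / pib x with hg3def
  have hg1m : Measurable g1 := (hmum.mul hhm).div hpibm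
  have hg2m : Measurable g2 := (hmubm.mul hhm).div hpibm
  have hg3m : Measurable g3 := hhm.div hpibm
  have hdivb : ∀ (r : ℝ) (x : Fin d → ℝ), |r| ≤ C → |r / pib x| ≤ C / ε := by
    intro r x hr
    rw [abs_div, abs_of_pos (hpibpos x)]
    exact div_le_div₀ hC0 hr hε (hpib x).1
  have hmuh : ∀ x, |mu x * h x| ≤ C := fun x => by
    rw [abs_mul]
    calc |mu x| * |h x| ≤ 1 * C :=
          mul_le_mul (habs _ (hmu01 x)) (hC x) (abs_nonneg _) zero_le_one
      _ = C := one_mul C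
  have hmubh : ∀ x, |mub x * h x| ≤ C := fun x => by
    rw [abs_mul]
    calc |mub x| * |h x| ≤ 1 * C :=
          mul_le_mul (habs _ (hmub x)) (hC x) (abs_nonneg _) zero_le_one
      _ = C := one_mul C
  have hg1b : ∀ x, |g1 x| ≤ C / ε := fun x => hdivb _ x (hmuh x)
  have hg2b : ∀ x, |g2 x| ≤ C / ε := fun x => hdivb _ x (hmubh x)
  have hg3b : ∀ x, |g3 x| ≤ C / ε := fun x => hdivb _ x (hC x)
  -- integrability helper
  have intb : ∀ f : Ω → ℝ, Measurable f → (∀ ω, |f ω| ≤ C / ε) → Integrable f P := by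
    intro f hf hb
    exact (integrable_const (C / ε)).mono' hf.aestronglyMeasurable
      (Filter.Eventually.of_forall fun ω => by simpa [Real.norm_eq_abs] using hb ω)
  have hAset : MeasurableSet {ω | A ω = a} := hA (measurableSet_singleton a)
  -- the Ω-level functions
  have intfY : Integrable (fun ω => if A ω = a then Y ω * g3 (X ω) else 0) P := by
    refine intb _ (Measurable.ite hAset (hY.mul (hg3m.comp hX)) measurable_const) fun ω => ?_
    by_cases hω : A ω = a
    · simp only [hω, if_true]
      rw [abs_mul]
      calc |Y ω| * |g3 (X ω)| ≤ 1 * (C / ε) :=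
            mul_le_mul (habs _ (hY01 ω)) (hg3b _) (abs_nonneg _) zero_le_one
        _ = C / ε := one_mul _
    · simpa [hω] using hCε0
  have intf2 : Integrable (fun ω => if A ω = a then g2 (X ω) else 0) P := by
    refine intb _ (Measurable.ite hAset (hg2m.comp hX) measurable_const) fun ω => ?_
    by_cases hω : A ω = a
    · simpa [hω] using hg2b (X ω)
    · simpa [hω] using hCε0
  have intp1 : Integrable (fun ω => piA (X ω) * g1 (X ω)) P := by
    refine intb _ ((hpim.comp hX).mul (hg1m.comp hX)) fun ω => ?_
    rw [abs_mul]
    calc |piA (X ω)| * |g1 (X ω)| ≤ 1 * (C / ε) :=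
          mul_le_mul (habs _ (hpi01 _)) (hg1b _) (abs_nonneg _) zero_le_one
      _ = C / ε := one_mul _
  have intp2 : Integrable (fun ω => piA (X ω) * g2 (X ω)) P := by
    refine intb _ ((hpim.comp hX).mul (hg2m.comp hX)) fun ω => ?_
    rw [abs_mul]
    calc |piA (X ω)| * |g2 (X ω)| ≤ 1 * (C / ε) :=
          mul_le_mul (habs _ (hpi01 _)) (hg2b _) (abs_nonneg _) zero_le_one
      _ = C / ε := one_mul _
  have intmbh : Integrable (fun ω => mub (X ω) * h (X ω)) P := by
    refine intb _ ((hmubm.comp hX).mul (hhm.comp hX)) fun ω => le_trans (hmubh (X ω)) hCle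
  have intmuh : Integrable (fun ω => mu (X ω) * h (X ω)) P := by
    refine intb _ ((hmum.comp hX).mul (hhm.comp hX)) fun ω => le_trans (hmuh (X ω)) hCle
  -- key identities from the conditional-expectation hypotheses
  have key1 : ∫ ω, (if A ω = a then Y ω * g3 (X ω) else 0) ∂P
      = ∫ ω, piA (X ω) * g1 (X ω) ∂P := by
    have e1 := hmu g3 hg3m ⟨C / ε, hg3b⟩
    have e2 := hpi g1 hg1m ⟨C / ε, hg1b⟩
    rw [e1, ← e2]
    refine integral_congr_ae (Filter.Eventually.of_forall fun ω => ?_)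
    by_cases hω : A ω = a <;> simp [hω, hg1def, hg3def, mul_div_assoc]
  have key2 : ∫ ω, (if A ω = a then g2 (X ω) else 0) ∂P
      = ∫ ω, piA (X ω) * g2 (X ω) ∂P := hpi g2 hg2m ⟨C / ε, hg2b⟩
  -- split the left-hand integrand
  have split : (fun ω => ((if A ω = a then (1 : ℝ) else 0) / pib (X ω) * (Y ω - mub (X ω))
        + mub (X ω)) * h (X ω))
      = fun ω => ((if A ω = a then Y ω * g3 (X ω) else 0)
          - (if A ω = a then g2 (X ω) else 0)) + mub (X ω) * h (X ω) := by
    funext ω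
    by_cases hω : A ω = a
    · simp only [hω, if_true, hg2def, hg3def]
      field_simp
    · simp [hω]
  have rhs_split : (fun ω => h (X ω) * (mu (X ω) - mub (X ω)) * (piA (X ω) - pib (X ω))
        / pib (X ω))
      = fun ω => (piA (X ω) * g1 (X ω) - piA (X ω) * g2 (X ω))
          + (mub (X ω) * h (X ω) - mu (X ω) * h (X ω)) := by
    funext ω
    have hp : pib (X ω) ≠ 0 := hpibne _
    simp only [hg1def, hg2def]
    field_simp
    ring
  have intsubL : Integrable (fun ω => (if A ω = a then Y ω * g3 (X ω) else 0)
      - (if A ω = a then g2 (X ω) else 0)) P := intfY.sub intf2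
  have intsubP : Integrable (fun ω => piA (X ω) * g1 (X ω) - piA (X ω) * g2 (X ω)) P :=
    intp1.sub intp2
  have intsubM : Integrable (fun ω => mub (X ω) * h (X ω) - mu (X ω) * h (X ω)) P :=
    intmbh.sub intmuh
  rw [split, rhs_split, integral_add intsubL intmbh, integral_sub intfY intf2,
    integral_add intsubP intsubM, integral_sub intp1 intp2,
    integral_sub intmbh intmuh, key1, key2]
  ring
end

section
/- Suppose the candidate propensity score is correct: π̄ = π_a almost everywhere with respect to the distribution of X, and π_a(X) ≥ ε almost surely for some ε > 0. Then for every measurable μ̄: ℝ^d → [0,1] and every bounded measurable h: ℝ^d → ℝ, the functional E[ (1{A=a}/π̄(X)) (Y − μ̄(X)) h(X) + μ̄(X) h(X) ] equals E[μ_a(X) h(X)], regardless of the choice of μ̄. -/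
open MeasureTheory

lemma bdd_integrable {Ω : Type*} [MeasurableSpace Ω] (P : Measure Ω) [IsFiniteMeasure P]
    {f : Ω → ℝ} (hf : Measurable f) (C : ℝ) (hb : ∀ ω, |f ω| ≤ C) : Integrable f P :=
  ⟨hf.aestronglyMeasurable, HasFiniteIntegral.of_bounded (C := C) (ae_of_all _ hb)⟩

/-- if the candidate propensity score is correct (a.e. w.r.t. the
distribution of X) and positivity holds, the influence-function functional recovers
E[μ_a(X) h(X)] for any candidate outcome regression μ̄. -/
theorem influence_function_correct_propensity
    {Ω : Type*} [MeasurableSpace Ω] (P : Measure Ω) [IsProbabilityMeasure P]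
    {d : ℕ} (X : Ω → (Fin d → ℝ)) (A : Ω → Bool) (Y : Ω → ℝ)
    (hX : Measurable X) (hA : Measurable A) (hY : Measurable Y)
    (hY01 : ∀ ω, Y ω ∈ Set.Icc (0 : ℝ) 1)
    (a : Bool)
    (piA mu : (Fin d → ℝ) → ℝ)
    (hpim : Measurable piA) (hmum : Measurable mu)
    (hpi01 : ∀ x, piA x ∈ Set.Icc (0 : ℝ) 1) (hmu01 : ∀ x, mu x ∈ Set.Icc (0 : ℝ) 1)
    -- π_a is a version of P(A = a | X):
    (hpi : ∀ g : (Fin d → ℝ) → ℝ, Measurable g → (∃ C, ∀ x, |g x| ≤ C) →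
      ∫ ω, (if A ω = a then g (X ω) else 0) ∂P = ∫ ω, piA (X ω) * g (X ω) ∂P)
    -- μ_a is a version of E[Y | X, A = a]:
    (hmu : ∀ g : (Fin d → ℝ) → ℝ, Measurable g → (∃ C, ∀ x, |g x| ≤ C) →
      ∫ ω, (if A ω = a then Y ω * g (X ω) else 0) ∂P
        = ∫ ω, (if A ω = a then mu (X ω) * g (X ω) else 0) ∂P)
    -- the candidate propensity score is correct and positivity holds:
    (pib : (Fin d → ℝ) → ℝ) (hpibm : Measurable pib)
    (hcorrect : ∀ᵐ x ∂(P.map X), pib x = piA x)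
    (ε : ℝ) (hε : 0 < ε) (hpos : ∀ᵐ ω ∂P, ε ≤ piA (X ω))
    -- arbitrary candidate outcome regression:
    (mub : (Fin d → ℝ) → ℝ) (hmubm : Measurable mub)
    (hmub : ∀ x, mub x ∈ Set.Icc (0 : ℝ) 1)
    -- bounded measurable h:
    (h : (Fin d → ℝ) → ℝ) (hhm : Measurable h) (hhb : ∃ C, ∀ x, |h x| ≤ C) :
    ∫ ω, ((if A ω = a then (1 : ℝ) else 0) / pib (X ω) * (Y ω - mub (X ω)) * h (X ω)
        + mub (X ω) * h (X ω)) ∂P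
      = ∫ ω, mu (X ω) * h (X ω) ∂P := by
  obtain ⟨C, hC⟩ := hhb
  have hC0 : 0 ≤ C := le_trans (abs_nonneg _) (hC 0)
  -- g := h / max(piA, ε)
  set g : (Fin d → ℝ) → ℝ := fun x => h x / max (piA x) ε with hg_def
  have hgm : Measurable g := hhm.div (hpim.max measurable_const)
  have hmaxpos : ∀ x, 0 < max (piA x) ε := fun x => lt_of_lt_of_le hε (le_max_right _ _)
  have hgb : ∀ x, |g x| ≤ C / ε := by
    intro x
    rw [hg_def]
    simp only
    rw [abs_div, abs_of_pos (hmaxpos x)]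
    exact div_le_div₀ (by positivity) (hC x) hε (le_max_right _ _)
  -- a.e. facts
  have hcorr' : ∀ᵐ ω ∂P, pib (X ω) = piA (X ω) := ae_of_ae_map hX.aemeasurable hcorrect
  -- integrability of the three pieces
  have mset : MeasurableSet {ω | A ω = a} := hA (measurableSet_singleton a)
  have int1 : Integrable (fun ω => if A ω = a then Y ω * g (X ω) else 0) P := by
    apply bdd_integrable P (Measurable.ite mset (hY.mul (hgm.comp hX)) measurable_const) (C / ε)
    intro ω; by_cases hω : A ω = a <;> simp [hω]
    · calc |Y ω| * |g (X ω)| = |Y ω| * |g (X ω)| := rfl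
        _ ≤ 1 * (C / ε) := by
            apply mul_le_mul _ (hgb _) (abs_nonneg _) zero_le_one
            rw [abs_le]; constructor <;> [linarith [(hY01 ω).1]; exact (hY01 ω).2]
        _ = C / ε := one_mul _
    · positivity
  have int2 : Integrable (fun ω => if A ω = a then mub (X ω) * g (X ω) else 0) P := by
    apply bdd_integrable P (Measurable.ite mset ((hmubm.comp hX).mul (hgm.comp hX)) measurable_const) (C / ε)
    intro ω; by_cases hω : A ω = a <;> simp [hω]
    · calc |mub (X ω)| * |g (X ω)| = |mub (X ω)| * |g (X ω)| := rfl
        _ ≤ 1 * (C / ε) := by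
            apply mul_le_mul _ (hgb _) (abs_nonneg _) zero_le_one
            rw [abs_le]; constructor <;> [linarith [(hmub (X ω)).1]; exact (hmub (X ω)).2]
        _ = C / ε := one_mul _
    · positivity
  have int3 : Integrable (fun ω => mub (X ω) * h (X ω)) P := by
    apply bdd_integrable P ((hmubm.comp hX).mul (hhm.comp hX)) C
    intro ω
    calc |mub (X ω) * h (X ω)| = |mub (X ω)| * |h (X ω)| := abs_mul _ _
      _ ≤ 1 * C := by
          apply mul_le_mul _ (hC _) (abs_nonneg _) zero_le_one
          rw [abs_le]; constructor <;> [linarith [(hmub (X ω)).1]; exact (hmub (X ω)).2]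
      _ = C := one_mul _
  have int4 : Integrable (fun ω => mu (X ω) * h (X ω)) P := by
    apply bdd_integrable P ((hmum.comp hX).mul (hhm.comp hX)) C
    intro ω
    calc |mu (X ω) * h (X ω)| = |mu (X ω)| * |h (X ω)| := abs_mul _ _
      _ ≤ 1 * C := by
          apply mul_le_mul _ (hC _) (abs_nonneg _) zero_le_one
          rw [abs_le]; constructor <;> [linarith [(hmu01 (X ω)).1]; exact (hmu01 (X ω)).2]
      _ = C := one_mul _
  -- step 1: rewrite LHS integrand a.e.
  have step1 : ∫ ω, ((if A ω = a then (1 : ℝ) else 0) / pib (X ω) * (Y ω - mub (X ω)) * h (X ω)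
        + mub (X ω) * h (X ω)) ∂P
      = ∫ ω, ((if A ω = a then Y ω * g (X ω) else 0)
          - (if A ω = a then mub (X ω) * g (X ω) else 0)
          + mub (X ω) * h (X ω)) ∂P := by
    apply integral_congr_ae
    filter_upwards [hcorr', hpos] with ω heq hge
    have hne : piA (X ω) ≠ 0 := ne_of_gt (lt_of_lt_of_le hε hge)
    have hmax : max (piA (X ω)) ε = piA (X ω) := max_eq_left hge
    rw [heq]
    by_cases hω : A ω = a <;> simp [hω, hg_def, hmax]
    field_simp
  rw [step1]
  have hsub : Integrable (fun ω =>
      (if A ω = a then Y ω * g (X ω) else 0) - (if A ω = a then mub (X ω) * g (X ω) else 0)) P :=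
    int1.sub int2
  rw [integral_add hsub int3, integral_sub int1 int2]
  -- step 2: hmu applied to g
  rw [hmu g hgm ⟨C / ε, hgb⟩]
  -- step 3: combine the two if-integrals into one via hpi
  have intmu_g : Integrable (fun ω => if A ω = a then mu (X ω) * g (X ω) else 0) P := by
    apply bdd_integrable P (Measurable.ite mset ((hmum.comp hX).mul (hgm.comp hX)) measurable_const) (C / ε)
    intro ω; by_cases hω : A ω = a <;> simp [hω]
    · calc |mu (X ω)| * |g (X ω)| = |mu (X ω)| * |g (X ω)| := rfl
        _ ≤ 1 * (C / ε) := by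
            apply mul_le_mul _ (hgb _) (abs_nonneg _) zero_le_one
            rw [abs_le]; constructor <;> [linarith [(hmu01 (X ω)).1]; exact (hmu01 (X ω)).2]
        _ = C / ε := one_mul _
    · positivity
  have key : ∫ ω, (if A ω = a then mu (X ω) * g (X ω) else 0) ∂P
      - ∫ ω, (if A ω = a then mub (X ω) * g (X ω) else 0) ∂P
      = ∫ ω, mu (X ω) * h (X ω) ∂P - ∫ ω, mub (X ω) * h (X ω) ∂P := by
    rw [← integral_sub intmu_g int2, ← integral_sub int4 int3]
    have hcomb : ∫ ω, ((if A ω = a then mu (X ω) * g (X ω) else 0)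
          - (if A ω = a then mub (X ω) * g (X ω) else 0)) ∂P
        = ∫ ω, (if A ω = a then (fun x => (mu x - mub x) * g x) (X ω) else 0) ∂P := by
      apply integral_congr_ae; apply ae_of_all; intro ω
      by_cases hω : A ω = a <;> simp [hω] <;> ring
    rw [hcomb]
    have hgb' : ∀ x, |(mu x - mub x) * g x| ≤ C / ε := by
      intro x
      calc |(mu x - mub x) * g x| = |mu x - mub x| * |g x| := abs_mul _ _
        _ ≤ 1 * (C / ε) := by
            apply mul_le_mul _ (hgb _) (abs_nonneg _) zero_le_one
            rw [abs_le]
            constructor <;>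
              [linarith [(hmu01 x).1, (hmub x).2]; linarith [(hmu01 x).2, (hmub x).1]]
        _ = C / ε := one_mul _
    rw [hpi (fun x => (mu x - mub x) * g x) ((hmum.sub hmubm).mul hgm) ⟨C / ε, hgb'⟩]
    apply integral_congr_ae
    filter_upwards [hpos] with ω hge
    have hne : piA (X ω) ≠ 0 := ne_of_gt (lt_of_lt_of_le hε hge)
    have hmax : max (piA (X ω)) ε = piA (X ω) := max_eq_left hge
    simp only [hg_def, hmax]
    field_simp
  linarith [key]
end

section
/- Suppose the candidate outcome regression is correct: μ̄ = μ_a almost everywhere with respect to the distribution of X. Then for every measurable π̄: ℝ^d → [ε, 1] with ε > 0 and every bounded measurable h: ℝ^d → ℝ, the functional E[ (1{A=a}/π̄(X)) (Y − μ̄(X)) h(X) + μ̄(X) h(X) ] equals E[μ_a(X) h(X)], regardless of the choice of π̄. -/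
open MeasureTheory

/-- if the candidate outcome regression is correct (a.e. w.r.t. the
distribution of X), the influence-function functional recovers E[μ_a(X) h(X)] for any
candidate propensity score π̄ bounded in [ε, 1]. -/
theorem influence_function_correct_outcome_regression
    {Ω : Type*} [MeasurableSpace Ω] (P : Measure Ω) [IsProbabilityMeasure P]
    {d : ℕ} (X : Ω → (Fin d → ℝ)) (A : Ω → Bool) (Y : Ω → ℝ)
    (hX : Measurable X) (hA : Measurable A) (hY : Measurable Y)
    (hY01 : ∀ ω, Y ω ∈ Set.Icc (0 : ℝ) 1)
    (a : Bool)
    (piA mu : (Fin d → ℝ) → ℝ)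
    (hpim : Measurable piA) (hmum : Measurable mu)
    (hpi01 : ∀ x, piA x ∈ Set.Icc (0 : ℝ) 1) (hmu01 : ∀ x, mu x ∈ Set.Icc (0 : ℝ) 1)
    -- π_a is a version of P(A = a | X):
    (hpi : ∀ g : (Fin d → ℝ) → ℝ, Measurable g → (∃ C, ∀ x, |g x| ≤ C) →
      ∫ ω, (if A ω = a then g (X ω) else 0) ∂P = ∫ ω, piA (X ω) * g (X ω) ∂P)
    -- μ_a is a version of E[Y | X, A = a]:
    (hmu : ∀ g : (Fin d → ℝ) → ℝ, Measurable g → (∃ C, ∀ x, |g x| ≤ C) →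
      ∫ ω, (if A ω = a then Y ω * g (X ω) else 0) ∂P
        = ∫ ω, (if A ω = a then mu (X ω) * g (X ω) else 0) ∂P)
    -- the candidate outcome regression is correct:
    (mub : (Fin d → ℝ) → ℝ) (hmubm : Measurable mub)
    (hmub01 : ∀ x, mub x ∈ Set.Icc (0 : ℝ) 1)
    (hcorrect : ∀ᵐ x ∂(P.map X), mub x = mu x)
    -- arbitrary candidate propensity score bounded in [ε, 1]:
    (ε : ℝ) (hε : 0 < ε)
    (pib : (Fin d → ℝ) → ℝ) (hpibm : Measurable pib)
    (hpib : ∀ x, pib x ∈ Set.Icc ε 1)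
    -- bounded measurable h:
    (h : (Fin d → ℝ) → ℝ) (hhm : Measurable h) (hhb : ∃ C, ∀ x, |h x| ≤ C) :
    ∫ ω, ((if A ω = a then (1 : ℝ) else 0) / pib (X ω) * (Y ω - mub (X ω)) * h (X ω)
        + mub (X ω) * h (X ω)) ∂P
      = ∫ ω, mu (X ω) * h (X ω) ∂P := by
  classical
  obtain ⟨C, hC⟩ := hhb
  have hC0 : 0 ≤ C := le_trans (abs_nonneg _) (hC (fun _ => 0))
  have hεle : ∀ x, ε ≤ pib x := fun x => (hpib x).1
  have hgb : ∀ x, |h x / pib x| ≤ C / ε := by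
    intro x
    rw [abs_div]
    apply div_le_div₀ hC0 (hC x) hε
    rw [abs_of_pos (lt_of_lt_of_le hε (hεle x))]
    exact hεle x
  have hgm : Measurable (fun x => h x / pib x) := hhm.div hpibm
  have haeX : ∀ᵐ ω ∂P, mub (X ω) = mu (X ω) := ae_of_ae_map hX.aemeasurable hcorrect
  have key : ∀ (f : Ω → ℝ) (D : ℝ), Measurable f → (∀ ω, |f ω| ≤ D) → Integrable f P :=
    fun f D hf hb => (integrable_const D).mono' hf.aestronglyMeasurable
      (Filter.Eventually.of_forall fun ω => by simpa using hb ω)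
  have hsA : MeasurableSet {ω | A ω = a} := hA (measurableSet_singleton a)
  have hI1 : Integrable (fun ω => (if A ω = a then Y ω * (h (X ω) / pib (X ω)) else 0)) P := by
    refine key _ (1 * (C / ε)) (Measurable.ite hsA (hY.mul (hgm.comp hX)) measurable_const) ?_
    intro ω
    by_cases hAa : A ω = a
    · simp only [hAa, if_true, abs_mul]
      exact mul_le_mul (abs_le.2 ⟨by linarith [(hY01 ω).1], (hY01 ω).2⟩) (hgb (X ω))
        (abs_nonneg _) zero_le_one
    · simp [hAa]; positivity
  have hI2 : Integrable (fun ω => (if A ω = a then mu (X ω) * (h (X ω) / pib (X ω)) else 0)) P := by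
    refine key _ (1 * (C / ε)) (Measurable.ite hsA ((hmum.comp hX).mul (hgm.comp hX)) measurable_const) ?_
    intro ω
    by_cases hAa : A ω = a
    · simp only [hAa, if_true, abs_mul]
      exact mul_le_mul (abs_le.2 ⟨by linarith [(hmu01 (X ω)).1], (hmu01 (X ω)).2⟩) (hgb (X ω))
        (abs_nonneg _) zero_le_one
    · simp [hAa]; positivity
  have hI3 : Integrable (fun ω => mu (X ω) * h (X ω)) P := by
    refine key _ (1 * C) ((hmum.comp hX).mul (hhm.comp hX)) ?_
    intro ω
    rw [abs_mul]
    exact mul_le_mul (abs_le.2 ⟨by linarith [(hmu01 (X ω)).1], (hmu01 (X ω)).2⟩) (hC (X ω))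
      (abs_nonneg _) zero_le_one
  have h1 : ∫ ω, ((if A ω = a then (1 : ℝ) else 0) / pib (X ω) * (Y ω - mub (X ω)) * h (X ω)
        + mub (X ω) * h (X ω)) ∂P
      = ∫ ω, ((if A ω = a then Y ω * (h (X ω) / pib (X ω)) else 0)
          - (if A ω = a then mu (X ω) * (h (X ω) / pib (X ω)) else 0)
          + mu (X ω) * h (X ω)) ∂P := by
    apply integral_congr_ae
    filter_upwards [haeX] with ω hω
    rw [hω]
    by_cases hAa : A ω = a
    · simp only [hAa, if_true]; field_simp
    · simp [hAa]
  have hI12 : Integrable (fun ω => (if A ω = a then Y ω * (h (X ω) / pib (X ω)) else 0)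
      - (if A ω = a then mu (X ω) * (h (X ω) / pib (X ω)) else 0)) P := hI1.sub hI2
  rw [h1, integral_add hI12 hI3, integral_sub hI1 hI2,
    hmu (fun x => h x / pib x) hgm ⟨C / ε, hgb⟩]
  simp
end

section
/- Under consistency (C1), no unmeasured confounding (C2), and positivity (C3), the counterfactual classification risk is identified: for every β ∈ ℝ^k and every measurable basis map b: ℝ^{d'} → ℝ^k with E‖b(V)‖ < ∞, where V = v(X) for a measurable map v: ℝ^d → ℝ^{d'}, one has −E[ Y^a log σ(βᵀb(V)) + (1 − Y^a) log(1 − σ(βᵀb(V))) ] = −E[ μ_a(X) log σ(βᵀb(V)) + (1 − μ_a(X)) log(1 − σ(βᵀb(V))) ], and both expectations are finite. -/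
open MeasureTheory ProbabilityTheory
open scoped RealInnerProductSpace

/-- The sigmoid (logistic) score function σ(t) = 1/(1 + e^{-t}). -/
noncomputable def sigmoid (t : ℝ) : ℝ := 1 / (1 + Real.exp (-t))

lemma one_add_exp_pos (t : ℝ) : 0 < 1 + Real.exp t := by positivity

lemma sigmoid_pos (t : ℝ) : 0 < sigmoid t := by
  unfold sigmoid; positivity

lemma one_sub_sigmoid (t : ℝ) : 1 - sigmoid t = sigmoid (-t) := by
  unfold sigmoid
  have h1 : (1 + Real.exp (-t)) ≠ 0 := (one_add_exp_pos _).ne'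
  have h2 : (1 + Real.exp (- -t)) ≠ 0 := (one_add_exp_pos _).ne'
  field_simp
  have h3 : Real.exp (-t) * Real.exp t = 1 := by rw [← Real.exp_add]; simp
  linear_combination h3

lemma log_sigmoid (t : ℝ) : Real.log (sigmoid t) = - Real.log (1 + Real.exp (-t)) := by
  unfold sigmoid
  rw [one_div, Real.log_inv]

lemma abs_log_sigmoid_le (t : ℝ) : |Real.log (sigmoid t)| ≤ |t| + Real.log 2 := by
  rw [log_sigmoid, abs_neg, abs_of_nonneg]
  · have hle : 1 + Real.exp (-t) ≤ Real.exp |t| * 2 := by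
      have h1 : Real.exp (-t) ≤ Real.exp |t| := Real.exp_le_exp.2 (neg_le_abs t)
      have h2 : (1:ℝ) ≤ Real.exp |t| := Real.one_le_exp (abs_nonneg t)
      nlinarith
    calc Real.log (1 + Real.exp (-t)) ≤ Real.log (Real.exp |t| * 2) :=
          Real.log_le_log (by positivity) hle
      _ = |t| + Real.log 2 := by rw [Real.log_mul (by positivity) (by norm_num), Real.log_exp]
  · exact Real.log_nonneg (by nlinarith [Real.exp_pos (-t)])

lemma sigmoid_continuous : Continuous sigmoid := by
  unfold sigmoid
  exact continuous_const.div (by continuity) (fun t => (one_add_exp_pos (-t)).ne')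

lemma integrable_of_bdd {Ω : Type*} {mΩ : MeasurableSpace Ω} {P : Measure Ω} [IsFiniteMeasure P]
    {f : Ω → ℝ} (hf : AEStronglyMeasurable f P) {C : ℝ} (h : ∀ᵐ ω ∂P, |f ω| ≤ C) :
    Integrable f P :=
  (integrable_const C).mono' hf (by simpa [Real.norm_eq_abs] using h)

lemma abs_setIntegral_le {Ω : Type*} {mΩ : MeasurableSpace Ω} {P : Measure Ω} [IsProbabilityMeasure P]
    {h : Ω → ℝ} {C : ℝ} (hC : ∀ᵐ ω ∂P, |h ω| ≤ C) (S : Set Ω) :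
    |∫ ω in S, h ω ∂P| ≤ C := by
  have hC0 : 0 ≤ C := by
    have hne : (MeasureTheory.ae P).NeBot := ae_neBot.2 (IsProbabilityMeasure.ne_zero P)
    obtain ⟨ω, hω⟩ := hC.exists
    exact le_trans (abs_nonneg _) hω
  have h1 : ‖∫ ω in S, h ω ∂P‖ ≤ ∫ ω in S, C ∂P := by
    refine norm_integral_le_of_norm_le (integrable_const C) ?_
    exact ae_restrict_of_ae (by simpa [Real.norm_eq_abs] using hC)
  rw [Real.norm_eq_abs] at h1
  refine h1.trans ?_
  rw [setIntegral_const, smul_eq_mul]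
  have h2 : (P S).toReal ≤ 1 :=
    ENNReal.toReal_le_of_le_ofReal one_pos.le (by simpa using prob_le_one (μ := P) (s := S))
  have h2' : P.real S ≤ 1 := h2
  nlinarith

/-- Under conditional independence of `Ya` and `A` given `m`, the set integral of
`1_B · Ya` over an `m`-measurable set equals that of `E[Ya|m] · E[1_B|m]`. -/
lemma setIntegral_indicator_mul_of_condIndep
    {Ω : Type*} [mΩ : MeasurableSpace Ω] [StandardBorelSpace Ω]
    (P : Measure Ω) [IsProbabilityMeasure P]
    {m : MeasurableSpace Ω} (hm : m ≤ mΩ)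
    {Ya : Ω → ℝ} (hYa : Measurable[mΩ] Ya) (hYa01 : ∀ ω, Ya ω ∈ Set.Icc (0:ℝ) 1)
    {A : Ω → Bool} (hA : Measurable[mΩ] A) (a : Bool)
    (hC2 : CondIndepFun m hm Ya A P)
    {S : Set Ω} (hS : MeasurableSet[m] S) :
    ∫ ω in S, (A ⁻¹' {a}).indicator (fun _ => (1:ℝ)) ω * Ya ω ∂P
      = ∫ ω in S, (P[Ya|m]) ω * (P⟦A ⁻¹' {a}|m⟧) ω ∂P := by
  classical
  letI : MeasurableSpace Ω := mΩ
  haveI hfin : IsFiniteMeasure (P.trim hm) :=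
    ⟨by rw [trim_measurableSet_eq hm MeasurableSet.univ]; exact measure_lt_top P _⟩
  set B : Set Ω := A ⁻¹' {a} with hBdef
  have hBmeas : MeasurableSet[mΩ] B := hA (measurableSet_singleton a)
  have hCI := (condIndepFun_iff_condExp_inter_preimage_eq_mul (μ := P) (hm' := hm) hYa hA).mp hC2
  -- a.e. bounds for conditional expectations of [0,1] functions
  have hce01 : ∀ f : Ω → ℝ, Integrable f P → (∀ ω, 0 ≤ f ω ∧ f ω ≤ 1) →
      ∀ᵐ ω ∂P, 0 ≤ (P[f|m]) ω ∧ (P[f|m]) ω ≤ 1 := by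
    intro f hfint hf01
    have h1 : 0 ≤ᵐ[P] P[f|m] := condExp_nonneg (Filter.Eventually.of_forall fun ω => (hf01 ω).1)
    have h2 : P[f|m] ≤ᵐ[P] P[(fun _ => (1:ℝ))|m] :=
      condExp_mono hfint (integrable_const 1) (Filter.Eventually.of_forall fun ω => (hf01 ω).2)
    rw [condExp_const hm] at h2
    filter_upwards [h1, h2] with ω h1 h2 using ⟨h1, h2⟩
  have hYaint : Integrable Ya P :=
    integrable_of_bdd hYa.aestronglyMeasurable (C := 1)
      (Filter.Eventually.of_forall fun ω => abs_le.mpr ⟨by linarith [(hYa01 ω).1], (hYa01 ω).2⟩)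
  have hBind01 : ∀ ω, 0 ≤ B.indicator (fun _ => (1:ℝ)) ω ∧ B.indicator (fun _ => (1:ℝ)) ω ≤ 1 := by
    intro ω; by_cases h : ω ∈ B <;> simp [Set.indicator_apply, h]
  have hKB01 := hce01 _ ((integrable_const 1).indicator hBmeas) hBind01
  have hKYa01 := hce01 _ hYaint (fun ω => ⟨(hYa01 ω).1, (hYa01 ω).2⟩)
  -- per-level identity
  have hlev : ∀ c : ℝ, ∫ ω in S, (Ya ⁻¹' Set.Ici c ∩ B).indicator (fun _ => (1:ℝ)) ω ∂P
      = ∫ ω in S, (P⟦Ya ⁻¹' Set.Ici c|m⟧) ω * (P⟦B|m⟧) ω ∂P := by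
    intro c
    have h1 : Integrable ((Ya ⁻¹' Set.Ici c ∩ B).indicator fun _ => (1:ℝ)) P :=
      (integrable_const 1).indicator ((hYa measurableSet_Ici).inter hBmeas)
    rw [← setIntegral_condExp hm h1 hS]
    exact integral_congr_ae
      (ae_restrict_of_ae (hCI _ _ measurableSet_Ici (measurableSet_singleton a)))
  -- integrands are integrable
  have hint1 : Integrable (fun ω => B.indicator (fun _ => (1:ℝ)) ω * Ya ω) P := by
    refine integrable_of_bdd ?_ (C := 1) ?_
    · exact (((measurable_const (a := (1:ℝ))).indicator hBmeas).mul hYa).aestronglyMeasurable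
    · refine Filter.Eventually.of_forall fun ω => ?_
      have h1 := hBind01 ω
      have h2 := hYa01 ω
      rw [abs_mul]
      calc |B.indicator (fun _ => (1:ℝ)) ω| * |Ya ω| ≤ 1 * 1 := by
            apply mul_le_mul
            · rw [abs_le]; exact ⟨by linarith [h1.1], h1.2⟩
            · rw [abs_le]; exact ⟨by linarith [h2.1], h2.2⟩
            · exact abs_nonneg _
            · norm_num
        _ = 1 := by norm_num
  have hint2 : Integrable (fun ω => (P[Ya|m]) ω * (P⟦B|m⟧) ω) P := by
    refine integrable_of_bdd
      (((stronglyMeasurable_condExp.mono hm).aestronglyMeasurable).mul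
        ((stronglyMeasurable_condExp.mono hm).aestronglyMeasurable)) (C := 1) ?_
    filter_upwards [hKB01, hKYa01] with ω h1 h2
    rw [abs_mul]
    calc |(P[Ya|m]) ω| * |(P⟦B|m⟧) ω| ≤ 1 * 1 := by
            apply mul_le_mul
            · rw [abs_le]; exact ⟨by linarith [h2.1], h2.2⟩
            · rw [abs_le]; exact ⟨by linarith [h1.1], h1.2⟩
            · exact abs_nonneg _
            · norm_num
        _ = 1 := by norm_num
  -- dyadic approximation bound
  have key : ∀ n : ℕ, 0 < n →
      |(∫ ω in S, B.indicator (fun _ => (1:ℝ)) ω * Ya ω ∂P)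
        - ∫ ω in S, (P[Ya|m]) ω * (P⟦B|m⟧) ω ∂P| ≤ 2 / n := by
    intro n hn
    have hn0 : (0:ℝ) < n := by exact_mod_cast hn
    set lev : ℕ → Set Ω := fun k => Ya ⁻¹' Set.Ici (((k:ℝ)+1)/n) with hlevdef
    have hlevmeas : ∀ k, MeasurableSet[mΩ] (lev k) := fun k => hYa measurableSet_Ici
    set Yn : Ω → ℝ :=
      fun ω => ∑ k ∈ Finset.range n, (n:ℝ)⁻¹ * (lev k).indicator (fun _ => (1:ℝ)) ω with hYndef
    -- pointwise: Yn = ⌊n · Ya⌋₊ / n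
    have hYn_eq : ∀ ω, Yn ω = (⌊(n:ℝ) * Ya ω⌋₊ : ℝ) / n := by
      intro ω
      have hx0 := (hYa01 ω).1
      have hx1 := (hYa01 ω).2
      set c : ℕ := ⌊(n:ℝ) * Ya ω⌋₊ with hc
      have hcn : c ≤ n := by
        have h1 : (n:ℝ) * Ya ω ≤ n := by nlinarith
        calc c ≤ ⌊(n:ℝ)⌋₊ := Nat.floor_le_floor h1
          _ = n := Nat.floor_natCast n
      have hterm : ∀ k ∈ Finset.range n,
          (n:ℝ)⁻¹ * (lev k).indicator (fun _ => (1:ℝ)) ω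
            = if k < c then (n:ℝ)⁻¹ else 0 := by
        intro k _
        have hiff : ω ∈ lev k ↔ k < c := by
          rw [hlevdef]
          simp only [Set.mem_preimage, Set.mem_Ici]
          rw [div_le_iff₀ hn0]
          constructor
          · intro h
            have h1 : ((k+1 : ℕ):ℝ) ≤ (n:ℝ) * Ya ω := by push_cast; linarith
            have := Nat.le_floor h1
            omega
          · intro h
            have h2 : (k+1 : ℕ) ≤ c := h
            have h3 := (Nat.le_floor_iff (by positivity)).mp h2
            push_cast at h3 ⊢
            linarith
        rw [Set.indicator_apply]
        by_cases h : ω ∈ lev k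
        · rw [if_pos h, if_pos (hiff.mp h), mul_one]
        · rw [if_neg h, if_neg (fun hc' => h (hiff.mpr hc')), mul_zero]
      rw [hYndef]
      simp only []
      rw [Finset.sum_congr rfl hterm, Finset.sum_ite, Finset.sum_const, Finset.sum_const_zero,
        add_zero]
      have hfe : (Finset.range n).filter (fun k => k < c) = Finset.range c := by
        ext k
        simp only [Finset.mem_filter, Finset.mem_range]
        omega
      rw [hfe, Finset.card_range, nsmul_eq_mul]
      rw [div_eq_mul_inv]
    have hYnbd : ∀ ω, Yn ω ≤ Ya ω ∧ Ya ω ≤ Yn ω + (n:ℝ)⁻¹ := by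
      intro ω
      rw [hYn_eq ω]
      have hx0 := (hYa01 ω).1
      have h1 : (⌊(n:ℝ) * Ya ω⌋₊ : ℝ) ≤ (n:ℝ) * Ya ω := Nat.floor_le (by positivity)
      have h2 : (n:ℝ) * Ya ω < (⌊(n:ℝ) * Ya ω⌋₊ : ℝ) + 1 := Nat.lt_floor_add_one _
      constructor
      · rw [div_le_iff₀ hn0]; nlinarith
      · rw [div_add' _ _ _ hn0.ne', le_div_iff₀ hn0]
        push_cast
        rw [inv_mul_cancel₀ hn0.ne'] at *
        nlinarith [mul_inv_cancel₀ hn0.ne']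
    -- integrability of the approximants
    have hlevint : ∀ k : ℕ, Integrable ((lev k).indicator fun _ => (1:ℝ)) P :=
      fun k => (integrable_const 1).indicator (hlevmeas k)
    have hYnint : Integrable Yn P := by
      rw [hYndef]
      apply integrable_finset_sum
      intro k _
      exact ((hlevint k).const_mul _)
    have hKlevΩ1 : ∀ k : ℕ, ∀ ω, 0 ≤ (lev k).indicator (fun _ => (1:ℝ)) ω ∧
        (lev k).indicator (fun _ => (1:ℝ)) ω ≤ 1 := by
      intro k ω; by_cases h : ω ∈ lev k <;> simp [Set.indicator_apply, h]
    have hKlev01 : ∀ k : ℕ, ∀ᵐ ω ∂P, 0 ≤ (P⟦lev k|m⟧) ω ∧ (P⟦lev k|m⟧) ω ≤ 1 :=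
      fun k => hce01 _ (hlevint k) (hKlevΩ1 k)
    have hKlevmeas : ∀ k : ℕ, AEStronglyMeasurable (P⟦lev k|m⟧) P :=
      fun k => (stronglyMeasurable_condExp.mono hm).aestronglyMeasurable
    have hKBmeas : AEStronglyMeasurable (P⟦B|m⟧) P :=
      (stronglyMeasurable_condExp.mono hm).aestronglyMeasurable
    -- pointwise product decomposition
    have hptw : ∀ ω, B.indicator (fun _ => (1:ℝ)) ω * Yn ω
        = ∑ k ∈ Finset.range n, (n:ℝ)⁻¹ * ((lev k ∩ B).indicator (fun _ => (1:ℝ)) ω) := by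
      intro ω
      rw [hYndef]
      simp only []
      rw [Finset.mul_sum]
      refine Finset.sum_congr rfl fun k _ => ?_
      by_cases hb : ω ∈ B <;> by_cases hl : ω ∈ lev k <;>
        simp [Set.indicator_apply, hb, hl, Set.mem_inter_iff]
    have hBYnint : Integrable (fun ω => B.indicator (fun _ => (1:ℝ)) ω * Yn ω) P := by
      rw [show (fun ω => B.indicator (fun _ => (1:ℝ)) ω * Yn ω)
          = fun ω => ∑ k ∈ Finset.range n, (n:ℝ)⁻¹ * ((lev k ∩ B).indicator (fun _ => (1:ℝ)) ω)
          from funext hptw]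
      apply integrable_finset_sum
      intro k _
      exact ((integrable_const 1).indicator ((hlevmeas k).inter hBmeas)).const_mul _
    -- step 1: ∫_S 1_B · Yn = ∑ₖ n⁻¹ ∫_S 1_{lev k ∩ B}
    have hA1 : ∫ ω in S, B.indicator (fun _ => (1:ℝ)) ω * Yn ω ∂P
        = ∑ k ∈ Finset.range n, (n:ℝ)⁻¹ * ∫ ω in S, (lev k ∩ B).indicator (fun _ => (1:ℝ)) ω ∂P := by
      rw [integral_congr_ae (ae_restrict_of_ae (Filter.Eventually.of_forall hptw))]
      rw [integral_finset_sum _ (fun k _ =>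
        (((integrable_const (1:ℝ)).indicator ((hlevmeas k).inter hBmeas)).const_mul _).restrict)]
      exact Finset.sum_congr rfl fun k _ => integral_const_mul _ _
    -- the conditional expectation approximant
    set En : Ω → ℝ := fun ω => ∑ k ∈ Finset.range n, (n:ℝ)⁻¹ * (P⟦lev k|m⟧) ω with hEndef
    have hEnmeas : AEStronglyMeasurable En P := by
      rw [hEndef]
      exact Finset.aestronglyMeasurable_fun_sum _ fun k _ => (hKlevmeas k).const_mul _
    have hEn01 : ∀ᵐ ω ∂P, |En ω| ≤ 1 := by
      have hall : ∀ᵐ ω ∂P, ∀ k ∈ Finset.range n, 0 ≤ (P⟦lev k|m⟧) ω ∧ (P⟦lev k|m⟧) ω ≤ 1 :=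
        (ae_ball_iff (Finset.range n).countable_toSet).2 fun k _ => hKlev01 k
      filter_upwards [hall] with ω hω
      rw [hEndef]
      simp only []
      calc |∑ k ∈ Finset.range n, (n:ℝ)⁻¹ * (P⟦lev k|m⟧) ω|
          ≤ ∑ k ∈ Finset.range n, |(n:ℝ)⁻¹ * (P⟦lev k|m⟧) ω| := Finset.abs_sum_le_sum_abs _ _
        _ ≤ ∑ k ∈ Finset.range n, (n:ℝ)⁻¹ := by
            refine Finset.sum_le_sum fun k hk => ?_
            rw [abs_mul, abs_of_nonneg (by positivity : (0:ℝ) ≤ (n:ℝ)⁻¹)]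
            have := hω k hk
            have h1 : |(P⟦lev k|m⟧) ω| ≤ 1 := abs_le.2 ⟨by linarith [this.1], this.2⟩
            nlinarith [inv_pos.2 hn0]
        _ = 1 := by
            rw [Finset.sum_const, Finset.card_range, nsmul_eq_mul, mul_inv_cancel₀ hn0.ne']
    have hEnKBint : Integrable (fun ω => En ω * (P⟦B|m⟧) ω) P := by
      refine integrable_of_bdd (hEnmeas.mul hKBmeas) (C := 1) ?_
      filter_upwards [hEn01, hKB01] with ω h1 h2
      rw [abs_mul]
      have h3 : |(P⟦B|m⟧) ω| ≤ 1 := abs_le.2 ⟨by linarith [h2.1], h2.2⟩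
      nlinarith [abs_nonneg (En ω), abs_nonneg ((P⟦B|m⟧) ω)]
    -- step 2: ∑ₖ n⁻¹ ∫_S ⟦lev k⟧·⟦B⟧ = ∫_S En·⟦B⟧
    have hA2 : ∫ ω in S, En ω * (P⟦B|m⟧) ω ∂P
        = ∑ k ∈ Finset.range n, (n:ℝ)⁻¹ * ∫ ω in S, (P⟦lev k|m⟧) ω * (P⟦B|m⟧) ω ∂P := by
      have hpt2 : ∀ ω, En ω * (P⟦B|m⟧) ω
          = ∑ k ∈ Finset.range n, (n:ℝ)⁻¹ * ((P⟦lev k|m⟧) ω * (P⟦B|m⟧) ω) := by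
        intro ω
        rw [hEndef]
        simp only []
        rw [Finset.sum_mul]
        exact Finset.sum_congr rfl fun k _ => by ring
      rw [integral_congr_ae (ae_restrict_of_ae (Filter.Eventually.of_forall hpt2))]
      have hintk : ∀ k : ℕ, Integrable (fun ω => (P⟦lev k|m⟧) ω * (P⟦B|m⟧) ω) P := by
        intro k
        refine integrable_of_bdd ((hKlevmeas k).mul hKBmeas) (C := 1) ?_
        filter_upwards [hKlev01 k, hKB01] with ω h1 h2
        rw [abs_mul]
        have h3 : |(P⟦lev k|m⟧) ω| ≤ 1 := abs_le.2 ⟨by linarith [h1.1], h1.2⟩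
        have h4 : |(P⟦B|m⟧) ω| ≤ 1 := abs_le.2 ⟨by linarith [h2.1], h2.2⟩
        nlinarith [abs_nonneg ((P⟦lev k|m⟧) ω), abs_nonneg ((P⟦B|m⟧) ω)]
      rw [integral_finset_sum _ (fun k _ => (((hintk k).const_mul _)).restrict)]
      exact Finset.sum_congr rfl fun k _ => integral_const_mul _ _
    -- combining with the per-level identity
    have hmid : ∫ ω in S, B.indicator (fun _ => (1:ℝ)) ω * Yn ω ∂P
        = ∫ ω in S, En ω * (P⟦B|m⟧) ω ∂P := by
      rw [hA1, hA2]
      exact Finset.sum_congr rfl fun k _ => by rw [hlev (((k:ℝ)+1)/n)]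
    -- relating En to E[Yn|m]
    have hEn_condexp : P[Yn|m] =ᵐ[P] En := by
      have h1 : Yn = ∑ k ∈ Finset.range n,
          (fun ω => (n:ℝ)⁻¹ * (lev k).indicator (fun _ => (1:ℝ)) ω) := by
        funext ω
        rw [hYndef, Finset.sum_apply]
      rw [h1]
      have h2 := condExp_finset_sum (μ := P) (m := m)
        (f := fun k (ω : Ω) => (n:ℝ)⁻¹ * (lev k).indicator (fun _ => (1:ℝ)) ω)
        (fun k (_ : k ∈ Finset.range n) => (hlevint k).const_mul _)
      refine h2.trans ?_
      have h3 : ∀ k ∈ Finset.range n,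
          P[fun ω => (n:ℝ)⁻¹ * (lev k).indicator (fun _ => (1:ℝ)) ω|m]
            =ᵐ[P] fun ω => (n:ℝ)⁻¹ * (P⟦lev k|m⟧) ω := by
        intro k _
        have h4 := condExp_smul (μ := P) (m := m) ((n:ℝ)⁻¹) ((lev k).indicator fun _ => (1:ℝ))
        have h5 : ((n:ℝ)⁻¹ • ((lev k).indicator fun _ => (1:ℝ)))
            = fun ω => (n:ℝ)⁻¹ * (lev k).indicator (fun _ => (1:ℝ)) ω := by
          funext ω; simp [smul_eq_mul]
        rw [h5] at h4
        refine h4.trans ?_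
        filter_upwards with ω
        simp [smul_eq_mul]
      have hmain : ∀ᵐ ω ∂P, ∀ k ∈ Finset.range n,
          (P[fun ω => (n:ℝ)⁻¹ * (lev k).indicator (fun _ => (1:ℝ)) ω|m]) ω
            = (n:ℝ)⁻¹ * (P⟦lev k|m⟧) ω :=
        (ae_ball_iff (Finset.range n).countable_toSet).2 h3
      filter_upwards [hmain] with ω hω
      rw [Finset.sum_apply, hEndef]
      exact Finset.sum_congr rfl hω
    -- |E[Yn|m] − E[Ya|m]| ≤ 1/n a.e.
    have hEnKYa : ∀ᵐ ω ∂P, |En ω - (P[Ya|m]) ω| ≤ (n:ℝ)⁻¹ := by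
      have hlow : P[Yn|m] ≤ᵐ[P] P[Ya|m] :=
        condExp_mono hYnint hYaint (Filter.Eventually.of_forall fun ω => (hYnbd ω).1)
      have hupp : P[Ya|m] ≤ᵐ[P] P[fun ω => Yn ω + (n:ℝ)⁻¹|m] :=
        condExp_mono hYaint (hYnint.add (integrable_const _))
          (Filter.Eventually.of_forall fun ω => (hYnbd ω).2)
      have hadd : P[fun ω => Yn ω + (n:ℝ)⁻¹|m] =ᵐ[P] fun ω => (P[Yn|m]) ω + (n:ℝ)⁻¹ := by
        have h6 := condExp_add (μ := P) (m := m) hYnint (integrable_const ((n:ℝ)⁻¹))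
        refine h6.trans ?_
        have h7 : P[fun (_ : Ω) => (n:ℝ)⁻¹|m] = fun _ => (n:ℝ)⁻¹ := condExp_const hm _
        filter_upwards with ω
        simp [h7]
      filter_upwards [hlow, hupp, hadd, hEn_condexp] with ω h1 h2 h3 h4
      rw [h3] at h2
      rw [abs_le]
      constructor <;> [skip; skip] <;> rw [← h4] <;> linarith
    have hbd2ae : ∀ᵐ ω ∂P, |En ω * (P⟦B|m⟧) ω - (P[Ya|m]) ω * (P⟦B|m⟧) ω| ≤ (n:ℝ)⁻¹ := by
      filter_upwards [hEnKYa, hKB01] with ω h1 h2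
      have h3 : |(P⟦B|m⟧) ω| ≤ 1 := abs_le.2 ⟨by linarith [h2.1], h2.2⟩
      have : En ω * (P⟦B|m⟧) ω - (P[Ya|m]) ω * (P⟦B|m⟧) ω
          = (En ω - (P[Ya|m]) ω) * (P⟦B|m⟧) ω := by ring
      rw [this, abs_mul]
      calc |En ω - (P[Ya|m]) ω| * |(P⟦B|m⟧) ω| ≤ (n:ℝ)⁻¹ * 1 :=
            mul_le_mul h1 h3 (abs_nonneg _) (by positivity)
        _ = (n:ℝ)⁻¹ := mul_one _
    have hbd1ae : ∀ᵐ ω ∂P, |B.indicator (fun _ => (1:ℝ)) ω * Ya ω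
        - B.indicator (fun _ => (1:ℝ)) ω * Yn ω| ≤ (n:ℝ)⁻¹ := by
      refine Filter.Eventually.of_forall fun ω => ?_
      have h1 := hBind01 ω
      have h2 := hYnbd ω
      have : B.indicator (fun _ => (1:ℝ)) ω * Ya ω - B.indicator (fun _ => (1:ℝ)) ω * Yn ω
          = B.indicator (fun _ => (1:ℝ)) ω * (Ya ω - Yn ω) := by ring
      rw [this, abs_mul]
      have h3 : |B.indicator (fun _ => (1:ℝ)) ω| ≤ 1 := abs_le.2 ⟨by linarith [h1.1], h1.2⟩
      have h4 : |Ya ω - Yn ω| ≤ (n:ℝ)⁻¹ := abs_le.2 ⟨by linarith [h2.1], by linarith [h2.2]⟩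
      calc |B.indicator (fun _ => (1:ℝ)) ω| * |Ya ω - Yn ω| ≤ 1 * (n:ℝ)⁻¹ :=
            mul_le_mul h3 h4 (abs_nonneg _) one_pos.le
        _ = (n:ℝ)⁻¹ := one_mul _
    -- putting the error bounds together
    have hb1 : |(∫ ω in S, B.indicator (fun _ => (1:ℝ)) ω * Ya ω ∂P)
        - ∫ ω in S, B.indicator (fun _ => (1:ℝ)) ω * Yn ω ∂P| ≤ (n:ℝ)⁻¹ := by
      rw [← integral_sub hint1.integrableOn hBYnint.integrableOn]
      exact abs_setIntegral_le hbd1ae S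
    have hb2 : |(∫ ω in S, En ω * (P⟦B|m⟧) ω ∂P)
        - ∫ ω in S, (P[Ya|m]) ω * (P⟦B|m⟧) ω ∂P| ≤ (n:ℝ)⁻¹ := by
      rw [← integral_sub hEnKBint.integrableOn hint2.integrableOn]
      exact abs_setIntegral_le hbd2ae S
    calc |(∫ ω in S, B.indicator (fun _ => (1:ℝ)) ω * Ya ω ∂P)
        - ∫ ω in S, (P[Ya|m]) ω * (P⟦B|m⟧) ω ∂P|
        ≤ |(∫ ω in S, B.indicator (fun _ => (1:ℝ)) ω * Ya ω ∂P)
            - ∫ ω in S, B.indicator (fun _ => (1:ℝ)) ω * Yn ω ∂P|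
          + |(∫ ω in S, B.indicator (fun _ => (1:ℝ)) ω * Yn ω ∂P)
            - ∫ ω in S, (P[Ya|m]) ω * (P⟦B|m⟧) ω ∂P| := by
          exact abs_sub_le _ _ _
      _ ≤ (n:ℝ)⁻¹ + (n:ℝ)⁻¹ := by
          refine add_le_add hb1 ?_
          rw [hmid]
          exact hb2
      _ = 2 / n := by rw [div_eq_mul_inv]; ring
  -- conclude by letting n → ∞
  have h0 : Filter.Tendsto (fun n : ℕ => 2 / (n:ℝ)) Filter.atTop (nhds 0) :=
    tendsto_const_div_atTop_nhds_zero_nat 2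
  have hle : |(∫ ω in S, B.indicator (fun _ => (1:ℝ)) ω * Ya ω ∂P)
      - ∫ ω in S, (P[Ya|m]) ω * (P⟦B|m⟧) ω ∂P| ≤ 0 := by
    refine ge_of_tendsto h0 ?_
    exact Filter.eventually_atTop.2 ⟨1, fun n hn => key n hn⟩
  exact sub_eq_zero.mp (abs_nonpos_iff.mp hle)


/-- identification of the counterfactual cross-entropy classification risk
under consistency, no unmeasured confounding and positivity; both expectations are
finite and equal. -/
theorem counterfactual_risk_identification
    {Ω : Type*} [MeasurableSpace Ω] [StandardBorelSpace Ω]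
    (P : Measure Ω) [IsProbabilityMeasure P]
    {d : ℕ} (X : Ω → (Fin d → ℝ)) (A : Ω → Bool) (Y : Ω → ℝ)
    (hX : Measurable X) (hA : Measurable A) (hY : Measurable Y)
    (hY01 : ∀ ω, Y ω ∈ Set.Icc (0 : ℝ) 1)
    (a : Bool)
    (piA mu : (Fin d → ℝ) → ℝ)
    (hpim : Measurable piA) (hmum : Measurable mu)
    (hpi01 : ∀ x, piA x ∈ Set.Icc (0 : ℝ) 1) (hmu01 : ∀ x, mu x ∈ Set.Icc (0 : ℝ) 1)
    -- π_a is a version of P(A = a | X):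
    (hpi : ∀ g : (Fin d → ℝ) → ℝ, Measurable g → (∃ C, ∀ x, |g x| ≤ C) →
      ∫ ω, (if A ω = a then g (X ω) else 0) ∂P = ∫ ω, piA (X ω) * g (X ω) ∂P)
    -- μ_a is a version of E[Y | X, A = a]:
    (hmu : ∀ g : (Fin d → ℝ) → ℝ, Measurable g → (∃ C, ∀ x, |g x| ≤ C) →
      ∫ ω, (if A ω = a then Y ω * g (X ω) else 0) ∂P
        = ∫ ω, (if A ω = a then mu (X ω) * g (X ω) else 0) ∂P)
    -- counterfactual outcome:
    (Ya : Ω → ℝ) (hYa : Measurable Ya) (hYa01 : ∀ ω, Ya ω ∈ Set.Icc (0 : ℝ) 1)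
    -- (C1) consistency:
    (hC1 : ∀ᵐ ω ∂P, A ω = a → Y ω = Ya ω)
    -- (C2) no unmeasured confounding: Y^a ⟂ A | σ(X):
    (hC2 : CondIndepFun (MeasurableSpace.comap X inferInstance) hX.comap_le Ya A P)
    -- (C3) positivity:
    (ε : ℝ) (hε : 0 < ε) (hC3 : ∀ᵐ ω ∂P, ε ≤ piA (X ω))
    -- predictors V = v(X), basis map b with E‖b(V)‖ < ∞, and coefficients β:
    {d' k : ℕ} (v : (Fin d → ℝ) → (Fin d' → ℝ)) (hv : Measurable v)
    (b : (Fin d' → ℝ) → EuclideanSpace ℝ (Fin k)) (hb : Measurable b)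
    (hbint : Integrable (fun ω => ‖b (v (X ω))‖) P)
    (β : EuclideanSpace ℝ (Fin k)) :
    Integrable (fun ω => Ya ω * Real.log (sigmoid ⟪β, b (v (X ω))⟫)
        + (1 - Ya ω) * Real.log (1 - sigmoid ⟪β, b (v (X ω))⟫)) P
    ∧ Integrable (fun ω => mu (X ω) * Real.log (sigmoid ⟪β, b (v (X ω))⟫)
        + (1 - mu (X ω)) * Real.log (1 - sigmoid ⟪β, b (v (X ω))⟫)) P
    ∧ -(∫ ω, (Ya ω * Real.log (sigmoid ⟪β, b (v (X ω))⟫)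
          + (1 - Ya ω) * Real.log (1 - sigmoid ⟪β, b (v (X ω))⟫)) ∂P)
      = -(∫ ω, (mu (X ω) * Real.log (sigmoid ⟪β, b (v (X ω))⟫)
          + (1 - mu (X ω)) * Real.log (1 - sigmoid ⟪β, b (v (X ω))⟫)) ∂P) := by
  classical
  letI mm : MeasurableSpace Ω := inferInstance
  set m : MeasurableSpace Ω := MeasurableSpace.comap X inferInstance with hm_def
  letI : MeasurableSpace Ω := mm
  have hm : m ≤ mm := hX.comap_le
  haveI hfin : IsFiniteMeasure (P.trim hm) :=
    ⟨by rw [trim_measurableSet_eq hm MeasurableSet.univ]; exact measure_lt_top P _⟩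
  -- the score and loss functions
  set q : (Fin d → ℝ) → ℝ := fun x => ⟪β, b (v x)⟫ with hq_def
  have hqm : Measurable q := (measurable_const (a := β)).inner (hb.comp hv)
  set L1 : (Fin d → ℝ) → ℝ := fun x => Real.log (sigmoid (q x)) with hL1_def
  set L2 : (Fin d → ℝ) → ℝ := fun x => Real.log (1 - sigmoid (q x)) with hL2_def
  have hL1m : Measurable L1 :=
    Real.measurable_log.comp (sigmoid_continuous.measurable.comp hqm)
  have hL2m : Measurable L2 := by
    have : L2 = fun x => Real.log (sigmoid (-(q x))) := by
      funext x; rw [hL2_def]; simp only []; rw [one_sub_sigmoid]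
    rw [this]
    exact Real.measurable_log.comp (sigmoid_continuous.measurable.comp hqm.neg)
  have hqbound : ∀ x, |q x| ≤ ‖β‖ * ‖b (v x)‖ := fun x => abs_real_inner_le_norm _ _
  have hbound1 : ∀ x, |L1 x| ≤ ‖β‖ * ‖b (v x)‖ + Real.log 2 := by
    intro x
    calc |L1 x| ≤ |q x| + Real.log 2 := abs_log_sigmoid_le (q x)
      _ ≤ ‖β‖ * ‖b (v x)‖ + Real.log 2 := by linarith [hqbound x]
  have hbound2 : ∀ x, |L2 x| ≤ ‖β‖ * ‖b (v x)‖ + Real.log 2 := by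
    intro x
    have h1 : L2 x = Real.log (sigmoid (-(q x))) := by
      rw [hL2_def]; simp only []; rw [one_sub_sigmoid]
    rw [h1]
    calc |Real.log (sigmoid (-(q x)))| ≤ |(-(q x))| + Real.log 2 := abs_log_sigmoid_le _
      _ ≤ ‖β‖ * ‖b (v x)‖ + Real.log 2 := by rw [abs_neg]; linarith [hqbound x]
  -- integrability of the loss functions composed with X
  have hGint : Integrable (fun ω => ‖β‖ * ‖b (v (X ω))‖ + Real.log 2) P :=
    (hbint.const_mul _).add (integrable_const _)
  have hL1int : Integrable (fun ω => L1 (X ω)) P :=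
    hGint.mono' ((hL1m.comp hX)).aestronglyMeasurable
      (Filter.Eventually.of_forall fun ω => by
        rw [Real.norm_eq_abs]; exact hbound1 (X ω))
  have hL2int : Integrable (fun ω => L2 (X ω)) P :=
    hGint.mono' ((hL2m.comp hX)).aestronglyMeasurable
      (Filter.Eventually.of_forall fun ω => by
        rw [Real.norm_eq_abs]; exact hbound2 (X ω))
  have hL12int : Integrable (fun ω => L1 (X ω) - L2 (X ω)) P := hL1int.sub hL2int
  -- m-measurable sets are preimages
  have hmS : ∀ S : Set Ω, MeasurableSet[m] S →
      ∃ u : Set (Fin d → ℝ), MeasurableSet u ∧ S = X ⁻¹' u := by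
    intro S hS
    obtain ⟨u, hu, hSu⟩ := hS
    exact ⟨u, hu, hSu.symm⟩
  have hXm : Measurable[m] X := comap_measurable X
  set B : Set Ω := A ⁻¹' {a} with hB_def
  have hBmeas : MeasurableSet B := hA (measurableSet_singleton a)
  have hBiff : ∀ ω, ω ∈ B ↔ A ω = a := by
    intro ω; rw [hB_def]; simp
  have hBval : ∀ ω, B.indicator (fun _ => (1:ℝ)) ω = if A ω = a then 1 else 0 := by
    intro ω
    rw [Set.indicator_apply]
    by_cases h : A ω = a
    · rw [if_pos ((hBiff ω).mpr h), if_pos h]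
    · rw [if_neg (fun hc => h ((hBiff ω).mp hc)), if_neg h]
  -- Step A : E[1_B | m] = piA ∘ X  a.e.
  have hKB : (fun ω => piA (X ω)) =ᵐ[P] P⟦B|m⟧ := by
    refine ae_eq_condExp_of_forall_setIntegral_eq hm
      ((integrable_const 1).indicator hBmeas) ?_ ?_ ?_
    · intro s _ _
      refine (integrable_of_bdd ((hpim.comp hX).aestronglyMeasurable) (C := 1) ?_).integrableOn
      refine Filter.Eventually.of_forall fun ω => ?_
      simp only [Function.comp_apply]
      exact abs_le.2 ⟨by linarith [(hpi01 (X ω)).1], (hpi01 (X ω)).2⟩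
    · intro S hS _
      obtain ⟨u, hu, rfl⟩ := hmS S hS
      have hind : Measurable (u.indicator fun _ => (1:ℝ)) := measurable_const.indicator hu
      have hindbd : ∃ C, ∀ x, |u.indicator (fun _ => (1:ℝ)) x| ≤ C := by
        refine ⟨1, fun x => ?_⟩
        by_cases h : x ∈ u <;> simp [Set.indicator_apply, h]
      have e1 : ∫ ω in X ⁻¹' u, piA (X ω) ∂P
          = ∫ ω, piA (X ω) * u.indicator (fun _ => (1:ℝ)) (X ω) ∂P := by
        rw [← integral_indicator (hX hu)]
        refine integral_congr_ae (Filter.Eventually.of_forall fun ω => ?_)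
        by_cases h : X ω ∈ u <;> simp [Set.indicator_apply, h]
      have e2 : ∫ ω in X ⁻¹' u, B.indicator (fun _ => (1:ℝ)) ω ∂P
          = ∫ ω, (if A ω = a then u.indicator (fun _ => (1:ℝ)) (X ω) else 0) ∂P := by
        rw [← integral_indicator (hX hu)]
        refine integral_congr_ae (Filter.Eventually.of_forall fun ω => ?_)
        rw [Set.indicator_apply]
        by_cases h : X ω ∈ u <;> by_cases h2 : A ω = a <;>
          simp [Set.indicator_apply, h, h2, hBval ω, (hBiff ω)]
      rw [e1, e2, hpi (u.indicator fun _ => (1:ℝ)) hind hindbd]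
    · exact ((hpim.comp hXm).stronglyMeasurable).aestronglyMeasurable
  -- a.e. bounds on E[Ya|m]
  have hYaint : Integrable Ya P :=
    integrable_of_bdd hYa.aestronglyMeasurable (C := 1)
      (Filter.Eventually.of_forall fun ω =>
        abs_le.2 ⟨by linarith [(hYa01 ω).1], (hYa01 ω).2⟩)
  have hKYa01 : ∀ᵐ ω ∂P, 0 ≤ (P[Ya|m]) ω ∧ (P[Ya|m]) ω ≤ 1 := by
    have h1 : 0 ≤ᵐ[P] P[Ya|m] :=
      condExp_nonneg (Filter.Eventually.of_forall fun ω => (hYa01 ω).1)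
    have h2 : P[Ya|m] ≤ᵐ[P] P[(fun _ => (1:ℝ))|m] :=
      condExp_mono hYaint (integrable_const 1)
        (Filter.Eventually.of_forall fun ω => (hYa01 ω).2)
    rw [condExp_const hm] at h2
    filter_upwards [h1, h2] with ω h1 h2 using ⟨h1, h2⟩
  -- Step B+C : E[Ya|m] = mu ∘ X  a.e.
  have hprod_eq : (fun ω => (P[Ya|m]) ω * piA (X ω))
      =ᵐ[P] (fun ω => mu (X ω) * piA (X ω)) := by
    refine ae_eq_of_forall_setIntegral_eq_of_sigmaFinite' hm ?_ ?_ ?_ ?_ ?_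
    · intro s _ _
      refine (integrable_of_bdd
        ((stronglyMeasurable_condExp.mono hm).aestronglyMeasurable.mul
          (hpim.comp hX).aestronglyMeasurable) (C := 1) ?_).integrableOn
      filter_upwards [hKYa01] with ω h1
      rw [Pi.mul_apply, Function.comp_apply, abs_mul]
      have h2 : |(P[Ya|m]) ω| ≤ 1 := abs_le.2 ⟨by linarith [h1.1], h1.2⟩
      have h3 : |piA (X ω)| ≤ 1 := abs_le.2 ⟨by linarith [(hpi01 (X ω)).1], (hpi01 (X ω)).2⟩
      nlinarith [abs_nonneg ((P[Ya|m]) ω), abs_nonneg (piA (X ω))]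
    · intro s _ _
      refine (integrable_of_bdd
        ((hmum.comp hX).aestronglyMeasurable.mul (hpim.comp hX).aestronglyMeasurable)
        (C := 1) ?_).integrableOn
      refine Filter.Eventually.of_forall fun ω => ?_
      rw [Pi.mul_apply, Function.comp_apply, Function.comp_apply, abs_mul]
      have h2 : |mu (X ω)| ≤ 1 := abs_le.2 ⟨by linarith [(hmu01 (X ω)).1], (hmu01 (X ω)).2⟩
      have h3 : |piA (X ω)| ≤ 1 := abs_le.2 ⟨by linarith [(hpi01 (X ω)).1], (hpi01 (X ω)).2⟩
      nlinarith [abs_nonneg (mu (X ω)), abs_nonneg (piA (X ω))]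
    · intro S hS _
      obtain ⟨u, hu, rfl⟩ := hmS S hS
      have hSm : MeasurableSet[m] (X ⁻¹' u) := hXm hu
      have hind : Measurable (u.indicator fun _ => (1:ℝ)) := measurable_const.indicator hu
      have hindbd1 : ∀ x, |u.indicator (fun _ => (1:ℝ)) x| ≤ 1 := by
        intro x; by_cases h : x ∈ u <;> simp [Set.indicator_apply, h]
      -- (1) replace piA∘X by the conditional probability of B
      have e1 : ∫ ω in X ⁻¹' u, (P[Ya|m]) ω * piA (X ω) ∂P
          = ∫ ω in X ⁻¹' u, (P[Ya|m]) ω * (P⟦B|m⟧) ω ∂P := by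
        refine integral_congr_ae (ae_restrict_of_ae ?_)
        filter_upwards [hKB] with ω h
        rw [h]
      -- (2) product rule from conditional independence
      have e2 : ∫ ω in X ⁻¹' u, (P[Ya|m]) ω * (P⟦B|m⟧) ω ∂P
          = ∫ ω in X ⁻¹' u, B.indicator (fun _ => (1:ℝ)) ω * Ya ω ∂P :=
        (setIntegral_indicator_mul_of_condIndep P hm hYa hYa01 hA a hC2 hSm).symm
      -- (3) consistency : on B, Ya = Y
      have e3 : ∫ ω in X ⁻¹' u, B.indicator (fun _ => (1:ℝ)) ω * Ya ω ∂P
          = ∫ ω in X ⁻¹' u, B.indicator (fun _ => (1:ℝ)) ω * Y ω ∂P := by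
        refine integral_congr_ae (ae_restrict_of_ae ?_)
        filter_upwards [hC1] with ω h
        by_cases hb : A ω = a
        · rw [hBval ω, if_pos hb, h hb]
        · rw [hBval ω, if_neg hb]; ring
      -- (4)-(6) outcome regression and propensity identities
      have e4 : ∫ ω in X ⁻¹' u, B.indicator (fun _ => (1:ℝ)) ω * Y ω ∂P
          = ∫ ω, (if A ω = a then Y ω * u.indicator (fun _ => (1:ℝ)) (X ω) else 0) ∂P := by
        rw [← integral_indicator (hX hu)]
        refine integral_congr_ae (Filter.Eventually.of_forall fun ω => ?_)
        rw [Set.indicator_apply]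
        by_cases h : X ω ∈ u <;> by_cases h2 : A ω = a <;>
          simp [Set.indicator_apply, h, h2, hBval ω, (hBiff ω)]
      have e5 := hmu (u.indicator fun _ => (1:ℝ)) hind ⟨1, hindbd1⟩
      have hmuind : Measurable (fun x => mu x * u.indicator (fun _ => (1:ℝ)) x) :=
        hmum.mul hind
      have hmuindbd : ∃ C, ∀ x, |mu x * u.indicator (fun _ => (1:ℝ)) x| ≤ C := by
        refine ⟨1, fun x => ?_⟩
        rw [abs_mul]
        have h2 : |mu x| ≤ 1 := abs_le.2 ⟨by linarith [(hmu01 x).1], (hmu01 x).2⟩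
        nlinarith [abs_nonneg (mu x), abs_nonneg (u.indicator (fun _ => (1:ℝ)) x),
          hindbd1 x]
      have e6 := hpi _ hmuind hmuindbd
      have e5' : ∫ ω, (if A ω = a then mu (X ω) * u.indicator (fun _ => (1:ℝ)) (X ω) else 0) ∂P
          = ∫ ω, (if A ω = a then (fun x => mu x * u.indicator (fun _ => (1:ℝ)) x) (X ω) else 0) ∂P := rfl
      have e7 : ∫ ω, piA (X ω) * (mu (X ω) * u.indicator (fun _ => (1:ℝ)) (X ω)) ∂P
          = ∫ ω in X ⁻¹' u, mu (X ω) * piA (X ω) ∂P := by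
        rw [← integral_indicator (hX hu)]
        refine integral_congr_ae (Filter.Eventually.of_forall fun ω => ?_)
        by_cases h : X ω ∈ u <;> simp [Set.indicator_apply, h] <;> ring
      rw [e1, e2, e3, e4, e5, e5', e6]
      rw [← e7]
    · exact (stronglyMeasurable_condExp.mul
        ((hpim.comp hXm).stronglyMeasurable)).aestronglyMeasurable
    · exact (((hmum.comp hXm).stronglyMeasurable).mul
        ((hpim.comp hXm).stronglyMeasurable)).aestronglyMeasurable
  have hKYa_eq : P[Ya|m] =ᵐ[P] fun ω => mu (X ω) := by
    filter_upwards [hprod_eq, hC3] with ω h1 h2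
    have hpos : piA (X ω) ≠ 0 := (lt_of_lt_of_le hε h2).ne'
    exact mul_right_cancel₀ hpos h1
  -- Step D : transfer lemma
  have key : ∀ f : (Fin d → ℝ) → ℝ, Measurable f → Integrable (fun ω => f (X ω)) P →
      ∫ ω, Ya ω * f (X ω) ∂P = ∫ ω, mu (X ω) * f (X ω) ∂P := by
    intro f hf hfint
    have hsm : StronglyMeasurable[m] (fun ω => f (X ω)) := (hf.comp hXm).stronglyMeasurable
    have hmulint : Integrable ((fun ω => f (X ω)) * Ya) P := by
      refine hfint.abs.mono' ((hf.comp hX).mul hYa).aestronglyMeasurable ?_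
      refine Filter.Eventually.of_forall fun ω => ?_
      rw [Pi.mul_apply, Real.norm_eq_abs, abs_mul]
      have h2 : |Ya ω| ≤ 1 := abs_le.2 ⟨by linarith [(hYa01 ω).1], (hYa01 ω).2⟩
      nlinarith [abs_nonneg (f (X ω)), abs_nonneg (Ya ω)]
    have hpull := condExp_mul_of_stronglyMeasurable_left (μ := P) hsm hmulint hYaint
    calc ∫ ω, Ya ω * f (X ω) ∂P = ∫ ω, ((fun ω => f (X ω)) * Ya) ω ∂P := by
          refine integral_congr_ae (Filter.Eventually.of_forall fun ω => ?_)
          rw [Pi.mul_apply]; ring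
      _ = ∫ ω, (P[(fun ω => f (X ω)) * Ya|m]) ω ∂P := (integral_condExp hm).symm
      _ = ∫ ω, f (X ω) * (P[Ya|m]) ω ∂P := by
          refine integral_congr_ae (hpull.mono fun ω h => ?_)
          rw [h, Pi.mul_apply]
      _ = ∫ ω, mu (X ω) * f (X ω) ∂P := by
          refine integral_congr_ae (hKYa_eq.mono fun ω h => ?_)
          show f (X ω) * (P[Ya|m]) ω = mu (X ω) * f (X ω)
          rw [h]; ring
  -- integrability of the four products
  have habsYa : ∀ ω, |Ya ω| ≤ 1 :=
    fun ω => abs_le.2 ⟨by linarith [(hYa01 ω).1], (hYa01 ω).2⟩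
  have habsYa' : ∀ ω, |1 - Ya ω| ≤ 1 :=
    fun ω => abs_le.2 ⟨by linarith [(hYa01 ω).2], by linarith [(hYa01 ω).1]⟩
  have habsmu : ∀ ω, |mu (X ω)| ≤ 1 :=
    fun ω => abs_le.2 ⟨by linarith [(hmu01 (X ω)).1], (hmu01 (X ω)).2⟩
  have habsmu' : ∀ ω, |1 - mu (X ω)| ≤ 1 :=
    fun ω => abs_le.2 ⟨by linarith [(hmu01 (X ω)).2], by linarith [(hmu01 (X ω)).1]⟩
  have hmulint' : ∀ (R : Ω → ℝ), Measurable R → (∀ ω, |R ω| ≤ 1) →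
      ∀ (L : (Fin d → ℝ) → ℝ), Measurable L → Integrable (fun ω => L (X ω)) P →
      Integrable (fun ω => R ω * L (X ω)) P := by
    intro R hR hRbd L hL hLint
    refine hLint.abs.mono' (hR.mul (hL.comp hX)).aestronglyMeasurable ?_
    refine Filter.Eventually.of_forall fun ω => ?_
    rw [Real.norm_eq_abs, abs_mul]
    nlinarith [abs_nonneg (R ω), abs_nonneg (L (X ω)), hRbd ω]
  have hI1 : Integrable (fun ω => Ya ω * L1 (X ω)) P :=
    hmulint' Ya hYa habsYa L1 hL1m hL1int
  have hI2 : Integrable (fun ω => (1 - Ya ω) * L2 (X ω)) P :=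
    hmulint' _ (measurable_const.sub hYa) habsYa' L2 hL2m hL2int
  have hI3 : Integrable (fun ω => mu (X ω) * L1 (X ω)) P :=
    hmulint' _ (hmum.comp hX) habsmu L1 hL1m hL1int
  have hI4 : Integrable (fun ω => (1 - mu (X ω)) * L2 (X ω)) P :=
    hmulint' _ (measurable_const.sub (hmum.comp hX)) habsmu' L2 hL2m hL2int
  have hIYa : Integrable (fun ω => Ya ω * L1 (X ω) + (1 - Ya ω) * L2 (X ω)) P := hI1.add hI2
  have hImu : Integrable (fun ω => mu (X ω) * L1 (X ω) + (1 - mu (X ω)) * L2 (X ω)) P :=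
    hI3.add hI4
  have hIYa12 : Integrable (fun ω => Ya ω * (L1 (X ω) - L2 (X ω))) P :=
    hmulint' Ya hYa habsYa _ (hL1m.sub hL2m) hL12int
  have hImu12 : Integrable (fun ω => mu (X ω) * (L1 (X ω) - L2 (X ω))) P :=
    hmulint' _ (hmum.comp hX) habsmu _ (hL1m.sub hL2m) hL12int
  -- the integral identities
  have hsplitYa : ∫ ω, (Ya ω * L1 (X ω) + (1 - Ya ω) * L2 (X ω)) ∂P
      = (∫ ω, Ya ω * (L1 (X ω) - L2 (X ω)) ∂P) + ∫ ω, L2 (X ω) ∂P := by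
    rw [← integral_add hIYa12 hL2int]
    refine integral_congr_ae (Filter.Eventually.of_forall fun ω => ?_)
    ring
  have hsplitmu : ∫ ω, (mu (X ω) * L1 (X ω) + (1 - mu (X ω)) * L2 (X ω)) ∂P
      = (∫ ω, mu (X ω) * (L1 (X ω) - L2 (X ω)) ∂P) + ∫ ω, L2 (X ω) ∂P := by
    rw [← integral_add hImu12 hL2int]
    refine integral_congr_ae (Filter.Eventually.of_forall fun ω => ?_)
    ring
  have hkeyL : ∫ ω, Ya ω * (L1 (X ω) - L2 (X ω)) ∂P
      = ∫ ω, mu (X ω) * (L1 (X ω) - L2 (X ω)) ∂P := by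
    have := key (fun x => L1 x - L2 x) (hL1m.sub hL2m) hL12int
    simpa using this
  refine ⟨hIYa, hImu, ?_⟩
  have : ∫ ω, (Ya ω * L1 (X ω) + (1 - Ya ω) * L2 (X ω)) ∂P
      = ∫ ω, (mu (X ω) * L1 (X ω) + (1 - mu (X ω)) * L2 (X ω)) ∂P := by
    rw [hsplitYa, hsplitmu, hkeyL]
  exact congrArg Neg.neg this
end
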